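/- Fix integers d_l ≥ 2, d_r ≥ 3, d_g ≥ 2 and a real β > 0. For every x with 0 < x < 1, the pair (x, x₂(x)) is a fixed point of the DE map T_{ε(x)}, i.e. T_{ε(x)}(x, x₂(x)) = (x, x₂(x)), where x₂(x) = x·(1 − (1−x)^{d_r−1}) and ε(x) = 1 + ln( x / (1 − (1−x)^{d_r−1})^{d_l−1} ) / ( β·(1 − x₂(x))^{d_g−1} ). -/

import Mathlib

/-- Density-evolution map of the `(d_l, d_r, d_g)` precoded-rateless code
with parameter `β > 0` over BEC(`ε`). -/
noncomputable def DEmap (dl dr dg : ℕ) (β ε : ℝ) (p : ℝ × ℝ) : ℝ × ℝ :=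
  ((1 - (1 - p.1)^(dr-1))^(dl-1) * Real.exp (-β*(1-ε)*(1-p.2)^(dg-1)),
   (1 - (1 - p.1)^(dr-1))^dl * Real.exp (-β*(1-ε)*(1-p.2)^(dg-1)))

/-- Second coordinate of the nontrivial DE fixed-point curve. -/
noncomputable def x₂curve (dr : ℕ) (x : ℝ) : ℝ := x * (1 - (1 - x)^(dr-1))

/-- Erasure-probability coordinate of the nontrivial DE fixed-point curve. -/
noncomputable def εcurve (dl dr dg : ℕ) (β x : ℝ) : ℝ :=
  1 + Real.log (x / (1 - (1 - x)^(dr-1))^(dl-1)) / (β * (1 - x₂curve dr x)^(dg-1))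

/-! With `a = 1 - (1 - x)^(d_r - 1)`, the map sends `(x, y)` to `(a^(d_l-1) E, a^(d_l) E)` where
`E` is the exponential factor; so `(x, x a)` is fixed exactly when `E = x / a^(d_l-1)`.
`εcurve` is the value of `ε` solving this for `E`, by taking logarithms. -/

open Real

lemma one_sub_one_sub_pow_pos {x : ℝ} (hx0 : 0 < x) (hx1 : x < 1) {n : ℕ} (hn : n ≠ 0) :
    0 < 1 - (1 - x) ^ n :=
  sub_pos.mpr (pow_lt_one₀ (by linarith) (by linarith) hn)

lemma x₂curve_lt_one (dr : ℕ) {x : ℝ} (hx0 : 0 < x) (hx1 : x < 1) : x₂curve dr x < 1 := by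
  have hpos : 0 < (1 - x) ^ (dr - 1) := pow_pos (by linarith) _
  unfold x₂curve
  nlinarith

lemma DEmap_eq_of_exp_eq {dl dr dg : ℕ} {β ε x y : ℝ} (hdl : 1 ≤ dl)
    (ha : 1 - (1 - x) ^ (dr - 1) ≠ 0)
    (hexp : exp (-β * (1 - ε) * (1 - y) ^ (dg - 1)) = x / (1 - (1 - x) ^ (dr - 1)) ^ (dl - 1)) :
    DEmap dl dr dg β ε (x, y) = (x, x * (1 - (1 - x) ^ (dr - 1))) := by
  obtain ⟨k, rfl⟩ := Nat.exists_eq_add_of_le' hdl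
  rw [Nat.add_sub_cancel] at hexp
  simp only [DEmap, Nat.add_sub_cancel, hexp, Prod.mk.injEq]
  constructor
  · field_simp
  · field_simp
    ring

lemma exp_εcurve (dl dr dg : ℕ) {β x : ℝ} (hβ : 0 < β) (hx0 : 0 < x) (hx1 : x < 1)
    (ha : 0 < 1 - (1 - x) ^ (dr - 1)) :
    exp (-β * (1 - εcurve dl dr dg β x) * (1 - x₂curve dr x) ^ (dg - 1))
      = x / (1 - (1 - x) ^ (dr - 1)) ^ (dl - 1) := by
  have hβ0 : β ≠ 0 := hβ.ne'
  have hx₂ : 1 - x₂curve dr x ≠ 0 := by linarith [x₂curve_lt_one dr hx0 hx1]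
  have hlog : -β * (1 - εcurve dl dr dg β x) * (1 - x₂curve dr x) ^ (dg - 1)
      = log (x / (1 - (1 - x) ^ (dr - 1)) ^ (dl - 1)) := by
    simp only [εcurve]
    field_simp
    ring
  rw [hlog, exp_log (div_pos hx0 (pow_pos ha _))]

theorem stmt_13 (dl dr dg : ℕ) (hdl : 2 ≤ dl) (hdr : 3 ≤ dr)
    (β : ℝ) (hβ : 0 < β) (x : ℝ) (hx0 : 0 < x) (hx1 : x < 1) :
    DEmap dl dr dg β (εcurve dl dr dg β x) (x, x₂curve dr x) = (x, x₂curve dr x) := by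
  have ha := one_sub_one_sub_pow_pos hx0 hx1 (n := dr - 1) (by omega)
  exact DEmap_eq_of_exp_eq (by omega) ha.ne' (exp_εcurve dl dr dg hβ hx0 hx1 ha)
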